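/- For a CWS code with minimum distance d, for all 0 ≤ j < d, the A-type enumerator A_j equals the number of weight-j elements of the CWS group S that commute with all M word operators: A_j = |{β ∈ E_j^n ∩ S : W_c(β) = M}|. -/
import Mathlib


open Matrix
open scoped Classical

noncomputable def pauli : Fin 4 → Matrix (Fin 2) (Fin 2) ℂ :=
  ![1, !![0, 1; 1, 0], !![0, -Complex.I; Complex.I, 0], !![1, 0; 0, -1]]

noncomputable def pauliOp {n : ℕ} (f : Fin n → Fin 4) :
    Matrix (Fin n → Fin 2) (Fin n → Fin 2) ℂ :=
  fun x y => ∏ i, pauli (f i) (x i) (y i)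

def pwt {n : ℕ} (f : Fin n → Fin 4) : ℕ :=
  (Finset.univ.filter fun i => f i ≠ 0).card

def PauliGroup (n : ℕ) : Set (Matrix (Fin n → Fin 2) (Fin n → Fin 2) ℂ) :=
  {A | ∃ (k : Fin 4) (f : Fin n → Fin 4), A = Complex.I ^ (k : ℕ) • pauliOp f}

noncomputable def psign (a b : Fin 4) : ℂ :=
  if a = 0 ∨ b = 0 ∨ a = b then 1 else -1

lemma psign_pm (a b : Fin 4) : psign a b = 1 ∨ psign a b = -1 := by
  unfold psign; split <;> simp

lemma pauli_comm (a b : Fin 4) :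
    pauli a * pauli b = psign a b • (pauli b * pauli a) := by
  fin_cases a <;> fin_cases b <;>
    simp [pauli, psign, Matrix.one_fin_two, Matrix.mul_fin_two, Matrix.smul_of]

lemma pauliOp_mul {n : ℕ} (f g : Fin n → Fin 4) (x y : Fin n → Fin 2) :
    (pauliOp f * pauliOp g) x y = ∏ i, (pauli (f i) * pauli (g i)) (x i) (y i) := by
  simp only [Matrix.mul_apply, pauliOp]
  rw [Finset.prod_univ_sum]
  rw [Fintype.piFinset_univ]
  exact Finset.sum_congr rfl fun z _ => Finset.prod_mul_distrib.symm

lemma pauliOp_comm {n : ℕ} (f g : Fin n → Fin 4) :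
    pauliOp f * pauliOp g = (∏ i, psign (f i) (g i)) • (pauliOp g * pauliOp f) := by
  ext x y
  rw [Matrix.smul_apply, pauliOp_mul, pauliOp_mul, smul_eq_mul, ← Finset.prod_mul_distrib]
  exact Finset.prod_congr rfl fun i _ => by rw [pauli_comm (f i) (g i)]; rfl

lemma pauliOp_dichotomy {n : ℕ} (f g : Fin n → Fin 4) :
    pauliOp f * pauliOp g = pauliOp g * pauliOp f ∨
    pauliOp f * pauliOp g = -(pauliOp g * pauliOp f) := by
  have h := pauliOp_comm f g
  have hpm : ∀ s : Finset (Fin n),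
      (∏ i ∈ s, psign (f i) (g i)) = 1 ∨ (∏ i ∈ s, psign (f i) (g i)) = -1 := by
    intro s
    induction s using Finset.induction with
    | empty => simp
    | @insert a s ha ih =>
      rw [Finset.prod_insert ha]
      rcases psign_pm (f a) (g a) with h1 | h1 <;> rcases ih with h2 | h2 <;>
        simp [h1, h2]
  have hpm := hpm Finset.univ
  rcases hpm with hpm | hpm
  · left; rw [h, hpm, one_smul]
  · right; rw [h, hpm, neg_smul, one_smul]

/-- for a CWS code of minimum distance d and 0 ≤ j < d, the A-type
enumerator A_j = (1/M²) Σ_{β ∈ E_j^n ∩ S} (W_c(β) - W_a(β))² equals the number of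
weight-j elements of S commuting with all M word operators. -/
theorem cws_A_enumerator_low_weight {n M d : ℕ} (hM : 0 < M)
    (S : Set (Matrix (Fin n → Fin 2) (Fin n → Fin 2) ℂ))
    (hSsub : ∀ A ∈ S, ∃ f : Fin n → Fin 4, A = pauliOp f ∨ A = -pauliOp f)
    (hone : (1 : Matrix (Fin n → Fin 2) (Fin n → Fin 2) ℂ) ∈ S)
    (hmul : ∀ A ∈ S, ∀ B ∈ S, A * B ∈ S)
    (habel : ∀ A ∈ S, ∀ B ∈ S, A * B = B * A)
    (hneg : (-1 : Matrix (Fin n → Fin 2) (Fin n → Fin 2) ℂ) ∉ S)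
    (hcard : S.ncard = 2 ^ n)
    (ψ : (Fin n → Fin 2) → ℂ)
    (hunit : star ψ ⬝ᵥ ψ = 1)
    (hstab : ∀ A ∈ S, A.mulVec ψ = ψ)
    (ω : Fin M → Matrix (Fin n → Fin 2) (Fin n → Fin 2) ℂ)
    (hωP : ∀ k, ω k ∈ PauliGroup n)
    (hωcomm : ∀ k l, ω k * ω l = ω l * ω k)
    (hω0 : ω ⟨0, hM⟩ = 1)
    (horth : ∀ k l, star ((ω k).mulVec ψ) ⬝ᵥ ((ω l).mulVec ψ) = if k = l then 1 else 0)
    (hdet : ∀ f : Fin n → Fin 4, pwt f < d → ∃ cβ : ℂ, ∀ k l,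
      star ((ω k).mulVec ψ) ⬝ᵥ (pauliOp f).mulVec ((ω l).mulVec ψ)
        = if k = l then cβ else 0)
    (j : ℕ) (hj : j < d) :
    (1 / (M : ℝ) ^ 2) *
      ∑ f ∈ Finset.univ.filter (fun f : Fin n → Fin 4 => pwt f = j),
        (if pauliOp f ∈ S then
          (((Finset.univ.filter fun k : Fin M =>
              ω k * pauliOp f = pauliOp f * ω k).card : ℝ) -
           ((Finset.univ.filter fun k : Fin M =>
              ω k * pauliOp f = -(pauliOp f * ω k)).card : ℝ)) ^ 2
         else 0)
    = ((Finset.univ.filter fun f : Fin n → Fin 4 =>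
        pwt f = j ∧ pauliOp f ∈ S ∧
          (Finset.univ.filter fun k : Fin M =>
            ω k * pauliOp f = pauliOp f * ω k).card = M).card : ℝ) := by
  -- Key claim: for f with pwt f = j and pauliOp f ∈ S, every ω k commutes with pauliOp f,
  -- and none anticommutes.
  have key : ∀ f : Fin n → Fin 4, pwt f = j → pauliOp f ∈ S →
      (∀ k, ω k * pauliOp f = pauliOp f * ω k) ∧
      (∀ k, ω k * pauliOp f ≠ -(pauliOp f * ω k)) := by
    intro f hwt hfS
    obtain ⟨cβ, hc⟩ := hdet f (hwt ▸ hj)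
    -- cβ = 1, using k = l = 0
    have hc1 : cβ = 1 := by
      have := hc ⟨0, hM⟩ ⟨0, hM⟩
      rw [hω0, if_pos rfl] at this
      rw [← this, Matrix.one_mulVec, hstab _ hfS, hunit]
    -- no k anticommutes
    have hanti : ∀ k, ω k * pauliOp f ≠ -(pauliOp f * ω k) := by
      intro k hk
      have hv : (pauliOp f).mulVec ((ω k).mulVec ψ) = -((ω k).mulVec ψ) := by
        have : pauliOp f * ω k = -(ω k * pauliOp f) := by rw [hk, neg_neg]
        rw [Matrix.mulVec_mulVec, this, Matrix.neg_mulVec, ← Matrix.mulVec_mulVec,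
          hstab _ hfS]
      have h1 := hc k k
      rw [if_pos rfl, hc1, hv] at h1
      have h2 := horth k k
      rw [if_pos rfl] at h2
      rw [dotProduct_neg, h2] at h1
      exact absurd h1 (by norm_num)
    refine ⟨fun k => ?_, hanti⟩
    -- each ω k commutes or anticommutes with pauliOp f
    obtain ⟨a, g, hg⟩ := hωP k
    rcases pauliOp_dichotomy g f with hd | hd
    · rw [hg, Matrix.smul_mul, Matrix.mul_smul, hd]
    · exfalso
      apply hanti k
      rw [hg, Matrix.smul_mul, Matrix.mul_smul, hd, smul_neg]
  have hterm : ∀ f ∈ Finset.univ.filter (fun f : Fin n → Fin 4 => pwt f = j),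
      (if pauliOp f ∈ S then
          (((Finset.univ.filter fun k : Fin M =>
              ω k * pauliOp f = pauliOp f * ω k).card : ℝ) -
           ((Finset.univ.filter fun k : Fin M =>
              ω k * pauliOp f = -(pauliOp f * ω k)).card : ℝ)) ^ 2
         else 0)
      = (if pauliOp f ∈ S then ((M : ℝ)) ^ 2 else 0) := by
    intro f hf
    rw [Finset.mem_filter] at hf
    by_cases hfS : pauliOp f ∈ S
    · obtain ⟨hcomm, hanti⟩ := key f hf.2 hfS
      rw [if_pos hfS, if_pos hfS]
      have e1 : (Finset.univ.filter fun k : Fin M =>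
          ω k * pauliOp f = pauliOp f * ω k) = Finset.univ :=
        Finset.filter_true_of_mem fun k _ => hcomm k
      have e2 : (Finset.univ.filter fun k : Fin M =>
          ω k * pauliOp f = -(pauliOp f * ω k)) = ∅ :=
        Finset.filter_false_of_mem fun k _ => hanti k
      rw [e1, e2]
      simp
    · rw [if_neg hfS, if_neg hfS]
  rw [Finset.sum_congr rfl hterm]
  have hfilter : (Finset.univ.filter fun f : Fin n → Fin 4 =>
      pwt f = j ∧ pauliOp f ∈ S ∧
        (Finset.univ.filter fun k : Fin M =>
          ω k * pauliOp f = pauliOp f * ω k).card = M)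
      = (Finset.univ.filter fun f : Fin n → Fin 4 => pwt f = j ∧ pauliOp f ∈ S) := by
    apply Finset.filter_congr
    intro f _
    constructor
    · rintro ⟨h1, h2, _⟩; exact ⟨h1, h2⟩
    · rintro ⟨h1, h2⟩
      refine ⟨h1, h2, ?_⟩
      rw [Finset.filter_true_of_mem fun k _ => (key f h1 h2).1 k, Finset.card_univ,
        Fintype.card_fin]
  rw [hfilter]
  rw [Finset.sum_ite, Finset.sum_const, Finset.sum_const_zero, add_zero]
  rw [Finset.filter_filter]
  rw [nsmul_eq_mul]
  have hM' : ((M : ℝ)) ^ 2 ≠ 0 := by positivity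
  field_simp
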